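/- Let (P, ≤, ', 0, 1) be a poset with complementation, M(x,y) = L(x,y), and R(x,y) = L(U(y,x')). Then for all x, y ∈ P: L((M(y',x))') = R(x,y) and L((R(y,x'))') = M(x,y), where A' = { a' : a ∈ A } for subsets A. -/

import Mathlib

/-! An antitone involution `f` is an order isomorphism onto the dual order, so it exchanges lower
and upper bounds: `f '' lowerBounds S = upperBounds (f '' S)` and dually. Both identities then
reduce to `L(U(L(S))) = L(S)`. -/

open Set

section AntitoneInvolution

variable {P : Type*} [Preorder P] {f : P → P}

theorem image_lowerBounds_eq_upperBounds_image (hf : Antitone f) (hinv : Function.Involutive f)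
    (S : Set P) : f '' lowerBounds S = upperBounds (f '' S) := by
  refine (hf.image_lowerBounds_subset_upperBounds_image).antisymm fun b hb => ⟨f b, ?_, hinv b⟩
  intro s hs
  simpa only [hinv s] using hf (hb (mem_image_of_mem f hs))

theorem image_upperBounds_eq_lowerBounds_image (hf : Antitone f) (hinv : Function.Involutive f)
    (S : Set P) : f '' upperBounds S = lowerBounds (f '' S) := by
  refine (hf.image_upperBounds_subset_lowerBounds_image).antisymm fun b hb => ⟨f b, ?_, hinv b⟩
  intro s hs
  simpa only [hinv s] using hf (hb (mem_image_of_mem f hs))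

end AntitoneInvolution

theorem lowerBounds_upperBounds_lowerBounds {P : Type*} [Preorder P] (S : Set P) :
    lowerBounds (upperBounds (lowerBounds S)) = lowerBounds S :=
  gc_upperBounds_lowerBounds.u_l_u_eq_u (OrderDual.toDual S)

theorem stmt15_general {P : Type*} [PartialOrder P] (f : P → P)
    (hant : ∀ x y : P, x ≤ y → f y ≤ f x)
    (hinv : ∀ x : P, f (f x) = x) :
    ∀ x y : P,
      lowerBounds (f '' lowerBounds {f y, x}) = lowerBounds (upperBounds {y, f x}) ∧
      lowerBounds (f '' lowerBounds (upperBounds {f x, f y})) = lowerBounds ({x, y} : Set P) := by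
  have hf : Antitone f := fun a b hab => hant a b hab
  intro x y
  constructor
  · rw [image_lowerBounds_eq_upperBounds_image hf hinv, image_pair, hinv]
  · rw [image_lowerBounds_eq_upperBounds_image hf hinv,
      image_upperBounds_eq_lowerBounds_image hf hinv, image_pair, hinv, hinv,
      lowerBounds_upperBounds_lowerBounds]

theorem stmt15 {P : Type*} [PartialOrder P] (f : P → P) (z o : P)
    (h0 : ∀ x, z ≤ x) (h1 : ∀ x, x ≤ o)
    (hc1 : ∀ x : P, lowerBounds {x, f x} = {z})
    (hc2 : ∀ x : P, upperBounds {x, f x} = {o})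
    (hant : ∀ x y : P, x ≤ y → f y ≤ f x)
    (hinv : ∀ x : P, f (f x) = x) :
    ∀ x y : P,
      lowerBounds (f '' lowerBounds {f y, x}) = lowerBounds (upperBounds {y, f x}) ∧
      lowerBounds (f '' lowerBounds (upperBounds {f x, f y})) = lowerBounds ({x, y} : Set P) :=
  stmt15_general f hant hinv
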